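/- The competitive-equilibrium fairness notion suffers from the inversion paradox for indivisible goods with additive valuations. Concretely, take 3 agents and 3 items e_1, e_2, e_3 with additive valuations v_1 = (6, 5, 4), v_2 = (6, 4, 5), v_3 = (5, 4, 6) (listing item values in order), and entitlement vectors b = (0.36, 0.38, 0.26) and b' = (0.36, 0.34, 0.30). Then b' 3-improves b; there exists a competitive-equilibrium allocation for b, and every competitive-equilibrium allocation for b gives agent 3 value 6 (agent 3 gets e_3); there exists a competitive-equilibrium allocation for b', and every competitive-equilibrium allocation for b' gives agent 3 value only 4 (agent 3 gets e_2). Hence every CE allocation for b gives agent 3 strictly more value than every CE allocation for b', even though b' >_3 b. -/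

import Mathlib

/-!
With entitlements between `0.26` and `0.38`, no CE leaves an agent empty-handed: she would
then find every item, all being valued positively, priced above her entitlement, hence above
half of anyone's, so nobody could afford two items, while with three items and an empty bundle
somebody must hold two. So a CE gives every agent exactly one item. An agent can afford the
bundle of anyone with a weakly smaller entitlement and so does not envy it. Under `b` (agents
numbered from 1) agent 2 therefore takes `e₁` and agent 1 prefers `e₂` to agent 3's item; under
`b'` agent 1 takes `e₁` and agent 2 prefers `e₃` to agent 3's item. The prices
`(0.38, 0.36, 0.26)` and `(0.36, 0.30, 0.34)` support these two allocations.
-/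

namespace Stmt14

open Finset

/-- A partition of the items into (possibly empty) bundles. -/
def IsPartition {n m : ℕ} (A : Fin n → Finset (Fin m)) : Prop :=
  (∀ i j, i ≠ j → Disjoint (A i) (A j)) ∧ ∀ e, ∃ i, e ∈ A i

/-- Additive value of a bundle. -/
def bval {m : ℕ} (w : Fin m → ℝ) (S : Finset (Fin m)) : ℝ := ∑ e ∈ S, w e

/-- The additive valuations: v₁ = (6,5,4), v₂ = (6,4,5), v₃ = (5,4,6). -/
def v : Fin 3 → Fin 3 → ℝ := ![![6, 5, 4], ![6, 4, 5], ![5, 4, 6]]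

/-- Entitlement vector b = (0.36, 0.38, 0.26). -/
noncomputable def b : Fin 3 → ℝ := ![0.36, 0.38, 0.26]

/-- Entitlement vector b' = (0.36, 0.34, 0.30). -/
noncomputable def b' : Fin 3 → ℝ := ![0.36, 0.34, 0.30]

/-- A competitive-equilibrium allocation under entitlements `β`: there are
nonnegative item prices making each agent's bundle affordable and of maximal
value among her affordable bundles. -/
noncomputable def CE (β : Fin 3 → ℝ) (A : Fin 3 → Finset (Fin 3)) : Prop :=
  IsPartition A ∧ ∃ p : Fin 3 → ℝ, (∀ e, 0 ≤ p e) ∧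
    ∀ i, (∑ e ∈ A i, p e ≤ β i) ∧
      ∀ S : Finset (Fin 3), (∑ e ∈ S, p e) ≤ β i → bval (v i) S ≤ bval (v i) (A i)

theorem card_le_one_of_sum_le {α R : Type*} [AddCommMonoid R] [PartialOrder R]
    [IsOrderedAddMonoid R] {p : α → R} {β : R} {S : Finset α} (hp : ∀ e, 0 ≤ p e)
    (hpair : ∀ e e', e ≠ e' → β < p e + p e') (hS : ∑ e ∈ S, p e ≤ β) : #S ≤ 1 := by
  classical
  by_contra! hS2
  obtain ⟨a, ha, c, hc, hac⟩ := one_lt_card.1 hS2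
  have hsub : p a + p c ≤ ∑ e ∈ S, p e := by
    rw [← sum_pair hac]
    exact sum_le_sum_of_subset_of_nonneg (by simp [insert_subset_iff, ha, hc]) fun e _ _ => hp e
  exact (hpair a c hac).not_ge (hsub.trans hS)

section Partition

variable {n : ℕ}

theorem IsPartition.sum_card {m : ℕ} {A : Fin n → Finset (Fin m)} (hA : IsPartition A) :
    ∑ i, #(A i) = m := by
  classical
  have hcover : univ.biUnion A = univ := eq_univ_of_forall fun e => by simpa using hA.2 e
  rw [← card_biUnion fun i _ j _ hij => hA.1 i j hij, hcover, card_univ, Fintype.card_fin]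

theorem IsPartition.exists_eq_empty_of_one_lt_card {A : Fin n → Finset (Fin n)}
    (hA : IsPartition A) {i : Fin n} (hi : 1 < #(A i)) : ∃ j, A j = ∅ := by
  by_contra! hne
  have hlt : ∑ _j : Fin n, 1 < ∑ j, #(A j) :=
    sum_lt_sum (fun j _ => card_pos.2 (hne j)) ⟨i, mem_univ _, hi⟩
  simp [hA.sum_card] at hlt

theorem IsPartition.exists_injective_eq_singleton {A : Fin n → Finset (Fin n)}
    (hA : IsPartition A) (hle : ∀ i, #(A i) ≤ 1) :
    ∃ x : Fin n → Fin n, Function.Injective x ∧ ∀ i, A i = {x i} := by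
  have hcard : ∀ i, #(A i) = 1 := by
    by_contra! ⟨i, hi⟩
    have hlt : ∑ j, #(A j) < ∑ _j : Fin n, 1 :=
      sum_lt_sum (fun j _ => hle j) ⟨i, mem_univ _, (hle i).lt_of_ne hi⟩
    simp [hA.sum_card] at hlt
  choose x hx using fun i => card_eq_one.1 (hcard i)
  refine ⟨x, fun i j hij => ?_, hx⟩
  by_contra hne
  simpa [hx i, hx j, hij] using hA.1 i j hne

theorem isPartition_singleton {x : Fin n → Fin n} (hx : Function.Injective x) :
    IsPartition fun i => {x i} := by
  refine ⟨fun i j hij => disjoint_singleton.2 (hx.ne hij), fun e => ?_⟩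
  obtain ⟨i, rfl⟩ := Finite.injective_iff_surjective.1 hx e
  exact ⟨i, mem_singleton_self _⟩

end Partition

theorem v_pos (i e : Fin 3) : 0 < v i e := by
  fin_cases i <;> fin_cases e <;> norm_num [v]

section CompetitiveEquilibrium

variable {β : Fin 3 → ℝ} {A : Fin 3 → Finset (Fin 3)}

theorem CE.bval_le_of_le (h : CE β A) {i j : Fin 3} (hji : β j ≤ β i) :
    bval (v i) (A j) ≤ bval (v i) (A i) := by
  obtain ⟨-, p, -, hp⟩ := h
  exact (hp i).2 _ ((hp j).1.trans hji)

theorem CE.card_le_one (h : CE β A) (hβ : ∀ i j, β i < 2 * β j) (i : Fin 3) : #(A i) ≤ 1 := by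
  obtain ⟨hA, p, hp0, hp⟩ := h
  by_contra! hi
  obtain ⟨j, hj⟩ := hA.exists_eq_empty_of_one_lt_card hi
  have hexpensive : ∀ e, β j < p e := fun e => by
    by_contra! he
    have hval := (hp j).2 {e} (by simpa using he)
    simp only [hj, bval, sum_singleton, sum_empty] at hval
    exact (v_pos j e).not_ge hval
  refine hi.not_ge (card_le_one_of_sum_le hp0 (fun e e' _ => ?_) (hp i).1)
  linarith [hexpensive e, hexpensive e', hβ i j]

theorem CE.exists_injective_eq_singleton (h : CE β A) (hβ : ∀ i j, β i < 2 * β j) :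
    ∃ x : Fin 3 → Fin 3, Function.Injective x ∧ ∀ i, A i = {x i} :=
  h.1.exists_injective_eq_singleton (h.card_le_one hβ)

theorem CE.of_injective {x : Fin 3 → Fin 3} (hx : Function.Injective x) (p : Fin 3 → ℝ)
    (hp0 : ∀ e, 0 ≤ p e) (hexpensive : ∀ i e, β i < 2 * p e) (hbudget : ∀ i, p (x i) ≤ β i)
    (hdemand : ∀ i e, p e ≤ β i → v i e ≤ v i (x i)) : CE β fun i => {x i} := by
  refine ⟨isPartition_singleton hx, p, hp0, fun i => ⟨by simpa using hbudget i, fun S hS => ?_⟩⟩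
  have hS1 : #S ≤ 1 :=
    card_le_one_of_sum_le hp0 (fun e e' _ => by linarith [hexpensive i e, hexpensive i e']) hS
  obtain ⟨e, hSe⟩ := card_le_one_iff_subset_singleton.1 hS1
  rcases subset_singleton_iff.1 hSe with rfl | rfl
  · simpa [bval] using (v_pos i (x i)).le
  · simpa [bval] using hdemand i e (by simpa using hS)

end CompetitiveEquilibrium

theorem eq_singleton_two_of_CE_b {A : Fin 3 → Finset (Fin 3)} (h : CE b A) : A 2 = {2} := by
  obtain ⟨x, hx, hA⟩ := h.exists_injective_eq_singleton
    (by intro i j; fin_cases i <;> fin_cases j <;> norm_num [b])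
  have h10 := h.bval_le_of_le (i := 1) (j := 0) (by norm_num [b, Matrix.cons_val_two])
  have h12 := h.bval_le_of_le (i := 1) (j := 2) (by norm_num [b, Matrix.cons_val_two])
  have h02 := h.bval_le_of_le (i := 0) (j := 2) (by norm_num [b, Matrix.cons_val_two])
  simp only [hA, bval, sum_singleton] at h10 h12 h02
  rw [hA 2, singleton_inj]
  have hx01 := hx.ne (show (0 : Fin 3) ≠ 1 by decide)
  have hx02 := hx.ne (show (0 : Fin 3) ≠ 2 by decide)
  have hx12 := hx.ne (show (1 : Fin 3) ≠ 2 by decide)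
  -- among the six injective `x`, only one satisfies the three no-envy inequalities
  generalize x 0 = a, x 1 = c, x 2 = d at *
  fin_cases a <;> fin_cases c <;> fin_cases d <;> simp_all [v] <;> norm_num at *

theorem eq_singleton_one_of_CE_b' {A : Fin 3 → Finset (Fin 3)} (h : CE b' A) : A 2 = {1} := by
  obtain ⟨x, hx, hA⟩ := h.exists_injective_eq_singleton
    (by intro i j; fin_cases i <;> fin_cases j <;> norm_num [b'])
  have h01 := h.bval_le_of_le (i := 0) (j := 1) (by norm_num [b'])
  have h02 := h.bval_le_of_le (i := 0) (j := 2) (by norm_num [b', Matrix.cons_val_two])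
  have h12 := h.bval_le_of_le (i := 1) (j := 2) (by norm_num [b', Matrix.cons_val_two])
  simp only [hA, bval, sum_singleton] at h01 h02 h12
  rw [hA 2, singleton_inj]
  have hx01 := hx.ne (show (0 : Fin 3) ≠ 1 by decide)
  have hx02 := hx.ne (show (0 : Fin 3) ≠ 2 by decide)
  have hx12 := hx.ne (show (1 : Fin 3) ≠ 2 by decide)
  generalize x 0 = a, x 1 = c, x 2 = d at *
  fin_cases a <;> fin_cases c <;> fin_cases d <;> simp_all [v] <;> norm_num at *

theorem exists_CE_b : ∃ A, CE b A :=
  ⟨_, CE.of_injective (x := ![1, 0, 2]) (by decide) ![0.38, 0.36, 0.26]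
    (by intro e; fin_cases e <;> norm_num)
    (by intro i e; fin_cases i <;> fin_cases e <;> norm_num [b])
    (by intro i; fin_cases i <;> norm_num [b, Matrix.cons_val_two])
    (by intro i e; fin_cases i <;> fin_cases e <;> norm_num [b, v, Matrix.cons_val_two])⟩

theorem exists_CE_b' : ∃ A, CE b' A :=
  ⟨_, CE.of_injective (x := ![0, 2, 1]) (by decide) ![0.36, 0.30, 0.34]
    (by intro e; fin_cases e <;> norm_num)
    (by intro i e; fin_cases i <;> fin_cases e <;> norm_num [b'])
    (by intro i; fin_cases i <;> norm_num [b', Matrix.cons_val_two])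
    (by intro i e; fin_cases i <;> fin_cases e <;> norm_num [b', v, Matrix.cons_val_two])⟩

/-- CE suffers from the inversion paradox: b' 3-improves b, yet
every CE allocation for b gives agent 3 the item e₃ of value 6, while every
CE allocation for b' gives agent 3 the item e₂ of value only 4. -/
theorem stmt_14 :
    -- b' 3-improves b
    (b 2 < b' 2 ∧ ∀ j, j ≠ 2 → b' j ≤ b j) ∧
    -- CE allocations for b exist, all giving agent 3 the bundle {e₃} of value 6
    (∃ A, CE b A) ∧
    (∀ A, CE b A → A 2 = {2} ∧ bval (v 2) (A 2) = 6) ∧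
    -- CE allocations for b' exist, all giving agent 3 the bundle {e₂} of value 4
    (∃ A, CE b' A) ∧
    (∀ A, CE b' A → A 2 = {1} ∧ bval (v 2) (A 2) = 4) ∧
    -- hence the inversion: agent 3 gets strictly more under b than under b'
    (∀ A A', CE b A → CE b' A' → bval (v 2) (A' 2) < bval (v 2) (A 2)) := by
  have hval : ∀ A, CE b A → bval (v 2) (A 2) = 6 := fun A hA => by
    simp [eq_singleton_two_of_CE_b hA, bval, v]
  have hval' : ∀ A, CE b' A → bval (v 2) (A 2) = 4 := fun A hA => by
    simp [eq_singleton_one_of_CE_b' hA, bval, v]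
  refine ⟨⟨by norm_num [b, b', Matrix.cons_val_two], fun j hj => ?_⟩, exists_CE_b,
    fun A hA => ⟨eq_singleton_two_of_CE_b hA, hval A hA⟩, exists_CE_b',
    fun A hA => ⟨eq_singleton_one_of_CE_b' hA, hval' A hA⟩, fun A A' hA hA' => ?_⟩
  · fin_cases j <;> simp_all <;> norm_num [b, b']
  · rw [hval A hA, hval' A' hA']
    norm_num

end Stmt14
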